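/- (Stationary discrete Carleman inequality.) Let d ≥ 1. There exists a constant c = c(d) > 0 such that for all α > 0 and R > 0, the inequality √(sinh(2α/R²)) · sinh(2α/(√d·R)) · ‖e^{α|j/R + 3e₁|²} g‖_{ℓ²(ℤ^d)} ≤ c · ‖e^{α|j/R + 3e₁|²} Δ_d g‖_{ℓ²(ℤ^d)} holds for every finitely supported g : ℤ^d → ℂ whose support is contained in the set {j ∈ ℤ^d : |j/R + 3e₁|² ≥ 1}. -/

import Mathlib

/-- Discrete Laplacian on `ℤ^d`:
`Δ_d f j = Σ_{k=1}^d (f (j+e_k) + f (j-e_k) - 2 f j)`. -/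
noncomputable def discreteLap {d : ℕ} (f : (Fin d → ℤ) → ℂ) (j : Fin d → ℤ) : ℂ :=
  ∑ k, (f (j + Pi.single k 1) + f (j - Pi.single k 1) - 2 * f j)

/-- The stationary Carleman weight exponent `|j/R + 3e₁|²`, where `j ∈ ℤ^d` is viewed as
a point of `ℝ^d` and `e₁` is the first standard basis vector. -/
noncomputable def wgt3 {d : ℕ} (R : ℝ) (j : Fin d → ℤ) : ℝ :=
  ∑ k, ((j k : ℝ) / R + if (k : ℕ) = 0 then 3 else 0) ^ 2
/-!
Put `x = j/R + 3e₁`, `φ = α|x|²` and `f = e^φ g`. Since `φ` is quadratic, `φ(j + e_k) - φ(j)`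
equals `a_k(j) + b` with `a_k = 2α x_k / R` and `b = α / R²`, and `a_k` increases by the constant
`2b` along `e_k` and is invariant along the other directions. Consequently
`e^φ Δ_d e^{-φ} = Σ_k (S_k + A_k)` with `S_k` symmetric and `A_k` antisymmetric for the `ℓ²`
pairing, `S_k` commuting with `A_l` for `k ≠ l`, and
`[S_k, A_k] = sinh 2b · (2 cosh 2a_k - τ_{2e_k} - τ_{-2e_k})`. Hence
`‖Σ_k (S_k + A_k) f‖² ≥ 2⟨S f, A f⟩ = Σ_k ⟨[S_k, A_k] f, f⟩`, which is at least
`4 sinh 2b · Σ_j (Σ_k sinh² a_k) |f_j|²` because translations have norm one.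
Where `g ≠ 0` we have `|x| ≥ 1`, so some `|x_k| ≥ 1/√d` and `Σ_k sinh² a_k ≥ sinh² (2α / (√d R))`;
the inequality follows with `c = 1/2`.
-/

open Function Real
open scoped RealInnerProductSpace

namespace DiscreteCarleman

variable {G E : Type*} [NormedAddCommGroup E]

lemma summable_mul_norm_sq_of_hasFiniteSupport {u : G → E} (hu : u.HasFiniteSupport) (c : G → ℝ) :
    Summable fun j => c j * ‖u j‖ ^ 2 :=
  summable_of_hasFiniteSupport <| hu.subset <| support_subset_iff'.2 fun j hj => by
    simp [notMem_support.1 hj]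

lemma summable_norm_sq_of_hasFiniteSupport {u : G → E} (hu : u.HasFiniteSupport) :
    Summable fun j => ‖u j‖ ^ 2 := by
  simpa using summable_mul_norm_sq_of_hasFiniteSupport hu 1

variable [InnerProductSpace ℝ E]

noncomputable def sumInner (u v : G → E) : ℝ := ∑' j, ⟪u j, v j⟫

section Pairing

variable {u v : G → E}

lemma summable_inner_of_hasFiniteSupport (hu : u.HasFiniteSupport) (v : G → E) :
    Summable fun j => ⟪u j, v j⟫ :=
  summable_of_hasFiniteSupport <| hu.subset <| support_subset_iff'.2 fun j hj => by
    rw [notMem_support.1 hj, inner_zero_left]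

lemma sumInner_comm (u v : G → E) : sumInner u v = sumInner v u :=
  tsum_congr fun _ => real_inner_comm _ _

lemma sumInner_add_right (hu : u.HasFiniteSupport) (v w : G → E) :
    sumInner u (v + w) = sumInner u v + sumInner u w := by
  simp only [sumInner, Pi.add_apply, inner_add_right]
  exact (summable_inner_of_hasFiniteSupport hu v).tsum_add
    (summable_inner_of_hasFiniteSupport hu w)

lemma sumInner_sub_right (hu : u.HasFiniteSupport) (v w : G → E) :
    sumInner u (v - w) = sumInner u v - sumInner u w := by
  simp only [sumInner, Pi.sub_apply, inner_sub_right]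
  exact (summable_inner_of_hasFiniteSupport hu v).tsum_sub
    (summable_inner_of_hasFiniteSupport hu w)

lemma sumInner_smul_right (u v : G → E) (c : ℝ) : sumInner u (c • v) = c * sumInner u v := by
  simp only [sumInner, Pi.smul_apply, real_inner_smul_right, tsum_mul_left]

lemma sumInner_add_left (hu : u.HasFiniteSupport) (hv : v.HasFiniteSupport) (w : G → E) :
    sumInner (u + v) w = sumInner u w + sumInner v w := by
  simp only [sumInner, Pi.add_apply, inner_add_left]
  exact (summable_inner_of_hasFiniteSupport hu w).tsum_add
    (summable_inner_of_hasFiniteSupport hv w)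

lemma sumInner_sub_left (hu : u.HasFiniteSupport) (hv : v.HasFiniteSupport) (w : G → E) :
    sumInner (u - v) w = sumInner u w - sumInner v w := by
  simp only [sumInner, Pi.sub_apply, inner_sub_left]
  exact (summable_inner_of_hasFiniteSupport hu w).tsum_sub
    (summable_inner_of_hasFiniteSupport hv w)

lemma sumInner_smul_left (c : ℝ) (u v : G → E) : sumInner (c • u) v = c * sumInner u v := by
  simp only [sumInner, Pi.smul_apply, real_inner_smul_left, tsum_mul_left]

lemma sumInner_sum_right {ι : Type*} (hu : u.HasFiniteSupport) (s : Finset ι) (v : ι → G → E) :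
    sumInner u (∑ i ∈ s, v i) = ∑ i ∈ s, sumInner u (v i) := by
  simp only [sumInner, Finset.sum_apply, inner_sum]
  exact Summable.tsum_finsetSum fun i _ => summable_inner_of_hasFiniteSupport hu (v i)

lemma sumInner_sum_left {ι : Type*} {s : Finset ι} {u : ι → G → E}
    (hu : ∀ i ∈ s, (u i).HasFiniteSupport) (v : G → E) :
    sumInner (∑ i ∈ s, u i) v = ∑ i ∈ s, sumInner (u i) v := by
  simp only [sumInner, Finset.sum_apply, sum_inner]
  exact Summable.tsum_finsetSum fun i hi => summable_inner_of_hasFiniteSupport (hu i hi) v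

lemma two_mul_sumInner_le (hu : u.HasFiniteSupport) (hv : v.HasFiniteSupport) :
    2 * sumInner u v ≤ ∑' j, ‖u j + v j‖ ^ 2 := by
  rw [sumInner, ← tsum_mul_left]
  refine (summable_inner_of_hasFiniteSupport hu v).mul_left 2 |>.tsum_le_tsum (fun j => ?_)
    (summable_norm_sq_of_hasFiniteSupport (by fun_prop))
  nlinarith [norm_add_sq_real (u j) (v j), sq_nonneg ‖u j‖, sq_nonneg ‖v j‖]

end Pairing

variable [AddCommGroup G]

lemma sumInner_comp_add_le {u : G → E} (hu : u.HasFiniteSupport) (v : G) :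
    sumInner u (fun j => u (j + v)) ≤ ∑' j, ‖u j‖ ^ 2 := by
  have hsq := summable_norm_sq_of_hasFiniteSupport hu
  have hsq' : Summable fun j => ‖u (j + v)‖ ^ 2 :=
    summable_norm_sq_of_hasFiniteSupport (by fun_prop (disch := exact add_left_injective v))
  have hshift : ∑' j, ‖u (j + v)‖ ^ 2 = ∑' j, ‖u j‖ ^ 2 :=
    (Equiv.addRight v).tsum_eq fun j => ‖u j‖ ^ 2
  calc sumInner u (fun j => u (j + v))
      ≤ ∑' j, (‖u j‖ ^ 2 + ‖u (j + v)‖ ^ 2) / 2 := by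
        refine (summable_inner_of_hasFiniteSupport hu _).tsum_le_tsum (fun j => ?_)
          ((hsq.add hsq').div_const 2)
        nlinarith [real_inner_le_norm (u j) (u (j + v)), sq_nonneg (‖u j‖ - ‖u (j + v)‖)]
    _ = ∑' j, ‖u j‖ ^ 2 := by
        rw [tsum_div_const, hsq.tsum_add hsq', hshift]
        ring

noncomputable def weightedShift (p : G → ℝ) (v : G) (f : G → E) : G → E :=
  fun j => p j • f (j + v)

@[fun_prop]
lemma HasFiniteSupport.weightedShift (p : G → ℝ) (v : G) {f : G → E}
    (hf : f.HasFiniteSupport) : (weightedShift p v f).HasFiniteSupport := by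
  unfold DiscreteCarleman.weightedShift
  fun_prop (disch := exact add_left_injective v)

lemma sumInner_weightedShift (p : G → ℝ) (v : G) (u w : G → E) :
    sumInner (weightedShift p v u) w
      = sumInner u (weightedShift (fun j => p (j - v)) (-v) w) := by
  rw [sumInner, sumInner, ← (Equiv.addRight v).tsum_eq fun j => ⟪u j, _⟫]
  refine tsum_congr fun j => ?_
  simp [weightedShift, real_inner_smul_left, real_inner_smul_right]

section ConjugatedLaplacian

variable {a a' : G → ℝ} {b : ℝ} {e e' : G} {f : G → E}

/- When `φ (j + e) = φ j + a j + b`, these are the symmetric and antisymmetric parts of the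
conjugated second difference `e^φ (τ_e + τ_{-e} - 2) e^{-φ}` (`symmPart_add_skewPart_exp_smul`). -/
noncomputable def symmPart (a : G → ℝ) (b : ℝ) (e : G) (f : G → E) : G → E :=
  weightedShift (fun j => cosh (a j + b)) e f + weightedShift (fun j => cosh (a j - b)) (-e) f
    - (2 : ℝ) • f

noncomputable def skewPart (a : G → ℝ) (b : ℝ) (e : G) (f : G → E) : G → E :=
  weightedShift (fun j => sinh (a j - b)) (-e) f - weightedShift (fun j => sinh (a j + b)) e f

lemma symmPart_apply (a : G → ℝ) (b : ℝ) (e : G) (f : G → E) (j : G) :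
    symmPart a b e f j
      = cosh (a j + b) • f (j + e) + cosh (a j - b) • f (j - e) - (2 : ℝ) • f j := by
  simp [symmPart, weightedShift, sub_eq_add_neg]

lemma skewPart_apply (a : G → ℝ) (b : ℝ) (e : G) (f : G → E) (j : G) :
    skewPart a b e f j = sinh (a j - b) • f (j - e) - sinh (a j + b) • f (j + e) := by
  simp [skewPart, weightedShift, sub_eq_add_neg]

@[fun_prop]
lemma HasFiniteSupport.symmPart (a : G → ℝ) (b : ℝ) (e : G) (hf : f.HasFiniteSupport) :
    (symmPart a b e f).HasFiniteSupport := by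
  unfold DiscreteCarleman.symmPart
  fun_prop

@[fun_prop]
lemma HasFiniteSupport.skewPart (a : G → ℝ) (b : ℝ) (e : G) (hf : f.HasFiniteSupport) :
    (skewPart a b e f).HasFiniteSupport := by
  unfold DiscreteCarleman.skewPart
  fun_prop

lemma apply_sub_of_apply_add (ha : ∀ j, a (j + e) = a j + 2 * b) (j : G) :
    a (j - e) = a j - 2 * b := by
  linarith [sub_add_cancel j e ▸ ha (j - e)]

lemma sumInner_symmPart (ha : ∀ j, a (j + e) = a j + 2 * b) (hf : f.HasFiniteSupport)
    (w : G → E) : sumInner (symmPart a b e f) w = sumInner f (symmPart a b e w) := by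
  have hm : (fun j => cosh (a (j - e) + b)) = fun j => cosh (a j - b) := by
    funext j; rw [apply_sub_of_apply_add ha]; ring_nf
  have hp : (fun j => cosh (a (j - -e) - b)) = fun j => cosh (a j + b) := by
    funext j; rw [sub_neg_eq_add, ha]; ring_nf
  rw [symmPart, symmPart, sumInner_sub_left (by fun_prop) (by fun_prop),
    sumInner_add_left (by fun_prop) (by fun_prop), sumInner_smul_left, sumInner_weightedShift,
    sumInner_weightedShift, hm, hp, neg_neg, sumInner_sub_right hf, sumInner_add_right hf,
    sumInner_smul_right, add_comm (sumInner f _)]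

lemma sumInner_skewPart (ha : ∀ j, a (j + e) = a j + 2 * b) (hf : f.HasFiniteSupport)
    (w : G → E) : sumInner (skewPart a b e f) w = -sumInner f (skewPart a b e w) := by
  have hm : (fun j => sinh (a (j - e) + b)) = fun j => sinh (a j - b) := by
    funext j; rw [apply_sub_of_apply_add ha]; ring_nf
  have hp : (fun j => sinh (a (j - -e) - b)) = fun j => sinh (a j + b) := by
    funext j; rw [sub_neg_eq_add, ha]; ring_nf
  rw [skewPart, skewPart, sumInner_sub_left (by fun_prop) (by fun_prop), sumInner_weightedShift,
    sumInner_weightedShift, hm, hp, neg_neg, sumInner_sub_right hf, neg_sub]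

lemma symmPart_skewPart_sub_skewPart_symmPart (ha : ∀ j, a (j + e) = a j + 2 * b)
    (f : G → E) :
    symmPart a b e (skewPart a b e f) - skewPart a b e (symmPart a b e f)
      = sinh (2 * b) • ((fun j => (2 * cosh (2 * a j)) • f j) - (fun j => f (j + 2 • e))
          - fun j => f (j - 2 • e)) := by
  funext j
  have c1 : sinh (2 * b)
      = sinh (a j + 3 * b) * cosh (a j + b) - cosh (a j + 3 * b) * sinh (a j + b) := by
    rw [← sinh_sub]; ring_nf
  have c2 : sinh (2 * b)
      = sinh (a j - b) * cosh (a j - 3 * b) - cosh (a j - b) * sinh (a j - 3 * b) := by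
    rw [← sinh_sub]; ring_nf
  have c3 : 2 * sinh (a j + b) * cosh (a j + b) - 2 * sinh (a j - b) * cosh (a j - b)
      = 2 * cosh (2 * a j) * sinh (2 * b) := by
    rw [← sinh_two_mul, ← sinh_two_mul, mul_add, mul_sub, sinh_add, sinh_sub]; ring
  simp only [Pi.sub_apply, Pi.smul_apply, symmPart_apply, skewPart_apply, ha,
    apply_sub_of_apply_add ha, two_nsmul, add_sub_cancel_right, sub_add_cancel, ← add_assoc,
    ← sub_sub]
  ring_nf at c1 c2 c3 ⊢
  linear_combination (norm := module) c1 • f (j + e + e) + c2 • f (j - e - e) + c3 • f j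

lemma symmPart_skewPart_comm {b' : ℝ} (hae' : ∀ j, a (j + e') = a j)
    (hae : ∀ j, a' (j + e) = a' j) (f : G → E) :
    symmPart a b e (skewPart a' b' e' f) = skewPart a' b' e' (symmPart a b e f) := by
  have hae'_sub (j : G) : a (j - e') = a j := by simpa using (hae' (j - e')).symm
  have hae_sub (j : G) : a' (j - e) = a' j := by simpa using (hae (j - e)).symm
  funext j
  simp only [symmPart_apply, skewPart_apply, hae, hae', hae_sub, hae'_sub]
  abel_nf
  module

lemma two_mul_sumInner_symmPart_skewPart {b' : ℝ} (ha : ∀ j, a (j + e) = a j + 2 * b)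
    (ha' : ∀ j, a' (j + e') = a' j + 2 * b') (hf : f.HasFiniteSupport) :
    2 * sumInner (symmPart a b e f) (skewPart a' b' e' f)
      = sumInner f
          (symmPart a b e (skewPart a' b' e' f) - skewPart a' b' e' (symmPart a b e f)) := by
  have hS := sumInner_symmPart ha hf (skewPart a' b' e' f)
  have hA := sumInner_skewPart ha' hf (symmPart a b e f)
  rw [sumInner_comm] at hA
  rw [sumInner_sub_right hf]
  linarith

lemma sinh_mul_tsum_le_two_mul_sumInner (ha : ∀ j, a (j + e) = a j + 2 * b) (hb : 0 ≤ b)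
    (hf : f.HasFiniteSupport) :
    sinh (2 * b) * ∑' j, 4 * sinh (a j) ^ 2 * ‖f j‖ ^ 2
      ≤ 2 * sumInner (symmPart a b e f) (skewPart a b e f) := by
  have hsq := summable_norm_sq_of_hasFiniteSupport hf
  have hpt (j : G) : ⟪f j, (2 * cosh (2 * a j)) • f j⟫ = 2 * cosh (2 * a j) * ‖f j‖ ^ 2 := by
    rw [real_inner_smul_right, real_inner_self_eq_norm_sq]
  have hcosh := (summable_inner_of_hasFiniteSupport hf _).congr hpt
  have h4 : ∑' j, 4 * sinh (a j) ^ 2 * ‖f j‖ ^ 2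
      = ∑' j, 2 * cosh (2 * a j) * ‖f j‖ ^ 2 - 2 * ∑' j, ‖f j‖ ^ 2 := by
    rw [← tsum_mul_left, ← hcosh.tsum_sub (hsq.mul_left 2)]
    refine tsum_congr fun j => ?_
    rw [cosh_two_mul, cosh_sq]
    ring
  have hdiag : sumInner f (fun j => (2 * cosh (2 * a j)) • f j)
      = ∑' j, 2 * cosh (2 * a j) * ‖f j‖ ^ 2 :=
    tsum_congr hpt
  have hplus := sumInner_comp_add_le hf (2 • e)
  have hminus : sumInner f (fun j => f (j - 2 • e)) ≤ ∑' j, ‖f j‖ ^ 2 := by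
    simpa only [sub_eq_add_neg] using sumInner_comp_add_le hf (-(2 • e))
  rw [two_mul_sumInner_symmPart_skewPart ha ha hf, symmPart_skewPart_sub_skewPart_symmPart ha,
    sumInner_smul_right, sumInner_sub_right hf, sumInner_sub_right hf, hdiag, h4]
  exact mul_le_mul_of_nonneg_left (by linarith) (sinh_nonneg_iff.2 (by linarith))

lemma symmPart_add_skewPart_exp_smul {φ : G → ℝ} (ha : ∀ j, a (j + e) = a j + 2 * b)
    (hφ : ∀ j, φ (j + e) = φ j + a j + b) (g : G → E) (j : G) :
    symmPart a b e (fun i => exp (φ i) • g i) j + skewPart a b e (fun i => exp (φ i) • g i) j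
      = exp (φ j) • (g (j + e) + g (j - e) - (2 : ℝ) • g j) := by
  have hφ_sub : φ (j - e) = φ j - a j + b := by
    have := hφ (j - e)
    rw [sub_add_cancel, apply_sub_of_apply_add ha] at this
    linarith
  have hp : (cosh (a j + b) - sinh (a j + b)) * exp (φ (j + e)) = exp (φ j) := by
    rw [cosh_sub_sinh, ← exp_add, hφ]; ring_nf
  have hm : (cosh (a j - b) + sinh (a j - b)) * exp (φ (j - e)) = exp (φ j) := by
    rw [cosh_add_sinh, ← exp_add, hφ_sub]; ring_nf
  simp only [symmPart_apply, skewPart_apply]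
  linear_combination (norm := module) hp • g (j + e) + hm • g (j - e)

end ConjugatedLaplacian

theorem four_mul_sinh_mul_tsum_le {ι : Type*} [Fintype ι] {a : ι → G → ℝ} {b : ℝ} {e : ι → G}
    {f : G → E} (hdiag : ∀ k j, a k (j + e k) = a k j + 2 * b)
    (hoff : ∀ k l, k ≠ l → ∀ j, a k (j + e l) = a k j) (hb : 0 ≤ b)
    (hf : f.HasFiniteSupport) :
    4 * sinh (2 * b) * ∑' j, (∑ k, sinh (a k j) ^ 2) * ‖f j‖ ^ 2
      ≤ ∑' j, ‖∑ k, (symmPart (a k) b (e k) f j + skewPart (a k) b (e k) f j)‖ ^ 2 := by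
  have hS : (∑ k, symmPart (a k) b (e k) f).HasFiniteSupport := by
    rw [Finset.sum_fn]; fun_prop
  have hA : (∑ k, skewPart (a k) b (e k) f).HasFiniteSupport := by
    rw [Finset.sum_fn]; fun_prop
  have hcross : 2 * sumInner (∑ k, symmPart (a k) b (e k) f) (∑ k, skewPart (a k) b (e k) f)
      = ∑ k, 2 * sumInner (symmPart (a k) b (e k) f) (skewPart (a k) b (e k) f) := by
    rw [sumInner_sum_left (fun k _ => by fun_prop), Finset.mul_sum]
    refine Finset.sum_congr rfl fun k _ => ?_
    rw [sumInner_sum_right (by fun_prop), Finset.mul_sum]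
    refine Finset.sum_eq_single k (fun l _ hlk => ?_) (by simp)
    rw [two_mul_sumInner_symmPart_skewPart (hdiag k) (hdiag l) hf,
      symmPart_skewPart_comm (hoff k l hlk.symm) (hoff l k hlk), sub_self]
    simp [sumInner]
  calc 4 * sinh (2 * b) * ∑' j, (∑ k, sinh (a k j) ^ 2) * ‖f j‖ ^ 2
      = ∑ k, sinh (2 * b) * ∑' j, 4 * sinh (a k j) ^ 2 * ‖f j‖ ^ 2 := by
        rw [← Finset.mul_sum, ← Summable.tsum_finsetSum fun k _ =>
          summable_mul_norm_sq_of_hasFiniteSupport hf _, ← tsum_mul_left, ← tsum_mul_left]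
        refine tsum_congr fun j => ?_
        rw [Finset.sum_mul, Finset.mul_sum, Finset.mul_sum]
        exact Finset.sum_congr rfl fun k _ => by ring
    _ ≤ ∑ k, 2 * sumInner (symmPart (a k) b (e k) f) (skewPart (a k) b (e k) f) :=
        Finset.sum_le_sum fun k _ => sinh_mul_tsum_le_two_mul_sumInner (hdiag k) hb hf
    _ = 2 * sumInner (∑ k, symmPart (a k) b (e k) f) (∑ k, skewPart (a k) b (e k) f) :=
        hcross.symm
    _ ≤ ∑' j, ‖∑ k, (symmPart (a k) b (e k) f j + skewPart (a k) b (e k) f j)‖ ^ 2 := by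
        simpa only [Finset.sum_apply, Finset.sum_add_distrib] using
          two_mul_sumInner_le hS hA

lemma sinh_sq_le_sinh_sq {x y : ℝ} (h : x ^ 2 ≤ y ^ 2) : sinh x ^ 2 ≤ sinh y ^ 2 := by
  rw [← sq_abs (sinh x), abs_sinh, ← sq_abs (sinh y), abs_sinh]
  exact pow_le_pow_left₀ (sinh_nonneg_iff.2 (abs_nonneg x))
    (sinh_le_sinh.2 (sq_le_sq.1 h)) 2

lemma sinh_sq_le_sum_sinh_sq {ι : Type*} [Fintype ι] {x : ι → ℝ} (hx : 1 ≤ ∑ k, x k ^ 2)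
    (t : ℝ) : sinh (t / √(Fintype.card ι)) ^ 2 ≤ ∑ k, sinh (t * x k) ^ 2 := by
  have : Nonempty ι := by
    by_contra h
    rw [not_nonempty_iff] at h
    norm_num at hx
  have hn : (0 : ℝ) < Fintype.card ι := by exact_mod_cast Fintype.card_pos
  obtain ⟨k, -, hk⟩ := Finset.exists_le_of_sum_le (f := fun _ => 1 / (Fintype.card ι : ℝ))
    (g := fun k => x k ^ 2)
    Finset.univ_nonempty (by simpa [hn.ne'] using hx)
  refine (sinh_sq_le_sinh_sq ?_).trans
    (Finset.single_le_sum (fun k _ => sq_nonneg (sinh (t * x k))) (Finset.mem_univ k))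
  rw [div_pow, sq_sqrt hn.le, mul_pow, div_eq_mul_one_div (t ^ 2)]
  exact mul_le_mul_of_nonneg_left hk (sq_nonneg t)

section Lattice

variable {n : ℕ}

noncomputable def latticePoint (R : ℝ) (j : Fin n → ℤ) (k : Fin n) : ℝ :=
  (j k : ℝ) / R + if (k : ℕ) = 0 then 3 else 0

lemma latticePoint_add_single_self (R : ℝ) (j : Fin n → ℤ) (k : Fin n) :
    latticePoint R (j + Pi.single k 1) k = latticePoint R j k + R⁻¹ := by
  simp only [latticePoint, Pi.add_apply, Pi.single_eq_same]
  push_cast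
  ring

lemma latticePoint_add_single_of_ne (R : ℝ) (j : Fin n → ℤ) {k l : Fin n} (h : k ≠ l) :
    latticePoint R (j + Pi.single l 1) k = latticePoint R j k := by
  simp [latticePoint, Pi.single_eq_of_ne h]

lemma wgt3_add_single (R : ℝ) (j : Fin n → ℤ) (k : Fin n) :
    wgt3 R (j + Pi.single k 1) = wgt3 R j + 2 * R⁻¹ * latticePoint R j k + R⁻¹ ^ 2 := by
  have hsum (j' : Fin n → ℤ) : wgt3 R j' = ∑ m, latticePoint R j' m ^ 2 := rfl
  rw [hsum, hsum, Fintype.sum_eq_add_sum_compl k, Fintype.sum_eq_add_sum_compl k,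
    latticePoint_add_single_self]
  rw [Finset.sum_congr rfl fun m hm => by
    rw [latticePoint_add_single_of_ne R j (by simpa using hm)]]
  ring

noncomputable def latticeCoeff (α R : ℝ) (k : Fin n) (j : Fin n → ℤ) : ℝ :=
  2 * α / R * latticePoint R j k

lemma latticeCoeff_add_single_self (α R : ℝ) (k : Fin n) (j : Fin n → ℤ) :
    latticeCoeff α R k (j + Pi.single k 1) = latticeCoeff α R k j + 2 * (α / R ^ 2) := by
  rw [latticeCoeff, latticeCoeff, latticePoint_add_single_self]
  ring

lemma latticeCoeff_add_single_of_ne (α R : ℝ) {k l : Fin n} (h : k ≠ l) (j : Fin n → ℤ) :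
    latticeCoeff α R k (j + Pi.single l 1) = latticeCoeff α R k j := by
  rw [latticeCoeff, latticeCoeff, latticePoint_add_single_of_ne R j h]

lemma exp_smul_discreteLap (α R : ℝ) (g : (Fin n → ℤ) → ℂ) (j : Fin n → ℤ) :
    exp (α * wgt3 R j) • discreteLap g j
      = ∑ k, (symmPart (latticeCoeff α R k) (α / R ^ 2) (Pi.single k 1)
            (fun i => exp (α * wgt3 R i) • g i) j
          + skewPart (latticeCoeff α R k) (α / R ^ 2) (Pi.single k 1)
            (fun i => exp (α * wgt3 R i) • g i) j) := by
  rw [discreteLap, Finset.smul_sum]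
  refine Finset.sum_congr rfl fun k _ => ?_
  rw [symmPart_add_skewPart_exp_smul (latticeCoeff_add_single_self α R k) fun i => ?_]
  · simp
  · rw [wgt3_add_single, latticeCoeff]
    ring

end Lattice

lemma sqrt_mul_mul_sqrt_le_half_sqrt {s m Q T : ℝ} (hs : 0 ≤ s) (hm : 0 ≤ m)
    (h : 4 * s * (m ^ 2 * Q) ≤ T) : √s * m * √Q ≤ 1 / 2 * √T :=
  calc √s * m * √Q = √(s * m ^ 2 * Q) := by
        rw [sqrt_mul (by positivity), sqrt_mul hs, sqrt_sq hm]
    _ ≤ √((1 / 2) ^ 2 * T) := sqrt_le_sqrt (by linarith)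
    _ = 1 / 2 * √T := by rw [sqrt_mul (by positivity), sqrt_sq (by norm_num)]

end DiscreteCarleman

open DiscreteCarleman

/-- **Stationary discrete Carleman inequality** (dimension `d+1 ≥ 1`).
There is `c = c(d) > 0` such that for all `α > 0`, `R > 0` and every finitely supported
`g : ℤ^d → ℂ` with support contained in `{j : |j/R + 3e₁|² ≥ 1}`,
`√(sinh(2α/R²)) sinh(2α/(√d R)) ‖e^{α|j/R+3e₁|²} g‖_{ℓ²} ≤ c ‖e^{α|j/R+3e₁|²} Δ_d g‖_{ℓ²}`. -/
theorem carleman_stationary (d : ℕ) :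
    ∃ c : ℝ, 0 < c ∧
      ∀ α R : ℝ, 0 < α → 0 < R →
        ∀ g : (Fin (d + 1) → ℤ) → ℂ,
          (Function.support g).Finite →
          (∀ j, g j ≠ 0 → 1 ≤ wgt3 R j) →
          Real.sqrt (Real.sinh (2 * α / R ^ 2)) *
              Real.sinh (2 * α / (Real.sqrt (d + 1) * R)) *
              Real.sqrt (∑' j : Fin (d + 1) → ℤ,
                Real.exp (α * wgt3 R j) ^ 2 * ‖g j‖ ^ 2) ≤
            c * Real.sqrt (∑' j : Fin (d + 1) → ℤ,
                Real.exp (α * wgt3 R j) ^ 2 * ‖discreteLap g j‖ ^ 2) := by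
  refine ⟨1 / 2, one_half_pos, fun α R hα hR g hg hsupp => ?_⟩
  set f : (Fin (d + 1) → ℤ) → ℂ := fun j => exp (α * wgt3 R j) • g j
  have hf : f.HasFiniteSupport := HasFiniteSupport.smul_right (fun j => exp (α * wgt3 R j)) hg
  have hnorm (z : ℂ) (j : Fin (d + 1) → ℤ) :
      exp (α * wgt3 R j) ^ 2 * ‖z‖ ^ 2 = ‖exp (α * wgt3 R j) • z‖ ^ 2 := by
    rw [norm_smul, norm_of_nonneg (exp_pos _).le, mul_pow]
  have hweight (j : Fin (d + 1) → ℤ) :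
      sinh (2 * α / (√(d + 1) * R)) ^ 2 * ‖f j‖ ^ 2
        ≤ (∑ k, sinh (latticeCoeff α R k j) ^ 2) * ‖f j‖ ^ 2 := by
    by_cases hgj : g j = 0
    · simp [f, hgj]
    refine mul_le_mul_of_nonneg_right ?_ (sq_nonneg _)
    have := sinh_sq_le_sum_sinh_sq (hsupp j hgj) (2 * α / R)
    rwa [Fintype.card_fin, Nat.cast_add_one, div_div, mul_comm R] at this
  have hcarleman := four_mul_sinh_mul_tsum_le (latticeCoeff_add_single_self α R)
    (fun k l h => latticeCoeff_add_single_of_ne α R h) (by positivity) hf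
  simp_rw [hnorm, exp_smul_discreteLap]
  refine sqrt_mul_mul_sqrt_le_half_sqrt (sinh_nonneg_iff.2 (by positivity))
    (sinh_nonneg_iff.2 (by positivity)) (le_trans ?_ hcarleman)
  rw [mul_div_assoc]
  gcongr
  rw [← tsum_mul_left]
  exact (summable_mul_norm_sq_of_hasFiniteSupport hf _).tsum_le_tsum hweight
    (summable_mul_norm_sq_of_hasFiniteSupport hf _)
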